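/- arXiv:2101.09462 — 6 statements merged into one kernel-verified Lean document; each statement's English description precedes it below -/
import Mathlib

section
/- Let k ≥ 1 and let G = (V,E) be a graph on n vertices. For any real penalty parameters c1 > 1 and c2 > 1, the linear-based QUBO value satisfies Q^l_{c1,c2}(k,G) = α_k(G); moreover, if (x̃, s̃, t̃) maximizes H^l_{c1,c2} over all binary (x,s,t), then x̃ is MkCS-feasible and Σ_{i∈[n],r∈[k]} x̃_{ir} = α_k(G). -/
open Finset

/-- `x ∈ {0,1}^{n×k}`. -/
def MkBin {n k : ℕ} (x : Fin n → Fin k → ℝ) : Prop :=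
  ∀ i r, x i r = 0 ∨ x i r = 1

/-- The edge set of a finite simple undirected graph, each unordered edge listed once. -/
def SimpleEdges {n : ℕ} (E : Finset (Fin n × Fin n)) : Prop :=
  (∀ p ∈ E, p.1 ≠ p.2) ∧ ∀ p ∈ E, p.swap ∉ E

/-- MkCS-feasibility of `x`. -/
def MkFeas {n k : ℕ} (E : Finset (Fin n × Fin n)) (x : Fin n → Fin k → ℝ) : Prop :=
  (∀ p ∈ E, ∀ r, x p.1 r + x p.2 r ≤ 1) ∧ ∀ i, (∑ r, x i r) ≤ 1

/-- The MkCS objective `Σ_{i,r} x_{ir}`. -/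
def MkObj {n k : ℕ} (x : Fin n → Fin k → ℝ) : ℝ := ∑ i, ∑ r, x i r

/-- Nonlinear-based QUBO objective `H^n_{c1,c2}`. -/
def Hn {n k : ℕ} (c1 c2 : ℝ) (E : Finset (Fin n × Fin n)) (x : Fin n → Fin k → ℝ) : ℝ :=
  MkObj x - c1 * (∑ p ∈ E, ∑ r, x p.1 r * x p.2 r)
    - c2 * (∑ i, ∑ r, ∑ p ∈ Finset.univ.filter (fun p => p ≠ r), x i r * x i p)

/-- `s ∈ {0,1}^{E×k}` (only the values on edges of `E` matter). -/
def SBin {n k : ℕ} (E : Finset (Fin n × Fin n)) (s : Fin n × Fin n → Fin k → ℝ) : Prop :=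
  ∀ p ∈ E, ∀ r, s p r = 0 ∨ s p r = 1

/-- `t ∈ {0,1}^n`. -/
def TBin {n : ℕ} (t : Fin n → ℝ) : Prop := ∀ i, t i = 0 ∨ t i = 1

/-- Linear-based QUBO objective `H^l_{c1,c2}`. -/
def Hl {n k : ℕ} (c1 c2 : ℝ) (E : Finset (Fin n × Fin n))
    (x : Fin n → Fin k → ℝ) (s : Fin n × Fin n → Fin k → ℝ) (t : Fin n → ℝ) : ℝ :=
  MkObj x - c1 * (∑ p ∈ E, ∑ r, (x p.1 r + x p.2 r + s p r - 1) ^ 2)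
    - c2 * (∑ i, ((∑ r, x i r) + t i - 1) ^ 2)


/-!
For binary `x, s, t` the slacks can only lower the penalties to the number of monochromatic
edges `C(x)` and the total excess `V(x) = Σ_i max(Σ_r x_ir - 1, 0)` of vertices carrying several
colours, so `H^l ≤ Σ x - c1 C(x) - c2 V(x)`. Deleting one colour from an endpoint of a
monochromatic edge, or from a vertex with several colours, costs `1` in the objective but lowers
`C + V` by at least `1`; iterating yields a feasible colouring of value at least
`Σ x - C(x) - V(x)`. Since `c1, c2 > 1`, every infeasible binary point is therefore strictly
worse than `α_k(G)`, while a feasible one with the slacks filling the constraints up attains its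
objective exactly.
-/

theorem Finset.sum_add_le_sum_of_le {ι M : Type*} [AddCommMonoid M] [PartialOrder M]
    [IsOrderedAddMonoid M] {s : Finset ι} {f g : ι → M} (h : ∀ i ∈ s, f i ≤ g i) {a : ι}
    (ha : a ∈ s) {d : M} (hd : f a + d ≤ g a) : ∑ i ∈ s, f i + d ≤ ∑ i ∈ s, g i := by
  classical
  rw [← add_sum_erase s f ha, ← add_sum_erase s g ha, add_right_comm]
  exact add_le_add hd (sum_le_sum fun i hi => h i (mem_of_mem_erase hi))

theorem Finset.sum_eq_card_filter_of_binary {ι : Type*} (s : Finset ι) (f : ι → ℝ)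
    (hf : ∀ i ∈ s, f i = 0 ∨ f i = 1) : ∑ i ∈ s, f i = #(s.filter (f · = 1)) := by
  rw [natCast_card_filter]
  refine sum_congr rfl fun i hi => ?_
  rcases hf i hi with h | h <;> simp [h]

section Binary

variable {n k : ℕ} {x : Fin n → Fin k → ℝ}

theorem MkBin.nonneg (hx : MkBin x) (i : Fin n) (r : Fin k) : 0 ≤ x i r := by
  rcases hx i r with h | h <;> simp [h]

theorem MkBin.exists_rowSum_eq (hx : MkBin x) (i : Fin n) : ∃ m : ℕ, ∑ r, x i r = m :=
  ⟨_, sum_eq_card_filter_of_binary _ _ fun r _ => hx i r⟩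

theorem MkBin.exists_mkObj_eq (hx : MkBin x) : ∃ N : ℕ, MkObj x = N := by
  refine ⟨#(univ.filter fun q : Fin n × Fin k => x q.1 q.2 = 1), ?_⟩
  rw [MkObj, ← Fintype.sum_prod_type']
  exact sum_eq_card_filter_of_binary _ (fun q : Fin n × Fin k => x q.1 q.2) fun q _ => hx _ _

end Binary

def edgeConflicts {n k : ℕ} (E : Finset (Fin n × Fin n)) (x : Fin n → Fin k → ℝ) : ℝ :=
  ∑ p ∈ E, ∑ r, x p.1 r * x p.2 r

def rowExcess {n k : ℕ} (x : Fin n → Fin k → ℝ) : ℝ :=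
  ∑ i, max ((∑ r, x i r) - 1) 0

theorem rowExcess_nonneg {n k : ℕ} (x : Fin n → Fin k → ℝ) : 0 ≤ rowExcess x :=
  sum_nonneg fun _ _ => le_max_right _ _

theorem MkBin.edgeConflicts_nonneg {n k : ℕ} {x : Fin n → Fin k → ℝ} (hx : MkBin x)
    (E : Finset (Fin n × Fin n)) : 0 ≤ edgeConflicts E x :=
  sum_nonneg fun _ _ => sum_nonneg fun _ _ => mul_nonneg (hx.nonneg _ _) (hx.nonneg _ _)

theorem mul_le_sq_add_add_sub_one {a b c : ℝ} (ha : a = 0 ∨ a = 1) (hb : b = 0 ∨ b = 1)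
    (hc : c = 0 ∨ c = 1) : a * b ≤ (a + b + c - 1) ^ 2 := by
  rcases ha with rfl | rfl <;> rcases hb with rfl | rfl <;> rcases hc with rfl | rfl <;> norm_num

theorem max_sub_one_zero_le_sq_add_sub_one (m : ℕ) {t : ℝ} (ht : 0 ≤ t) :
    max ((m : ℝ) - 1) 0 ≤ ((m : ℝ) + t - 1) ^ 2 := by
  rcases Nat.eq_zero_or_pos m with rfl | hm
  · simpa using sq_nonneg (t - 1)
  · obtain ⟨j, rfl⟩ := Nat.exists_eq_add_of_le' hm
    have hj : (j : ℝ) ≤ (j : ℝ) ^ 2 := by exact_mod_cast Nat.le_self_pow two_ne_zero j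
    push_cast
    rw [add_sub_cancel_right, max_eq_left j.cast_nonneg]
    nlinarith

section Penalties

variable {n k : ℕ} {E : Finset (Fin n × Fin n)} {c1 c2 : ℝ} {x : Fin n → Fin k → ℝ}
  {s : Fin n × Fin n → Fin k → ℝ} {t : Fin n → ℝ}

theorem Hl_le_obj (hc1 : 0 ≤ c1) (hc2 : 0 ≤ c2) : Hl c1 c2 E x s t ≤ MkObj x := by
  have h1 : 0 ≤ ∑ p ∈ E, ∑ r, (x p.1 r + x p.2 r + s p r - 1) ^ 2 := by positivity
  have h2 : 0 ≤ ∑ i, ((∑ r, x i r) + t i - 1) ^ 2 := by positivity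
  unfold Hl
  linarith [mul_nonneg hc1 h1, mul_nonneg hc2 h2]

theorem Hl_le_obj_sub_penalties (hc1 : 0 ≤ c1) (hc2 : 0 ≤ c2) (hx : MkBin x) (hs : SBin E s)
    (ht : TBin t) :
    Hl c1 c2 E x s t ≤ MkObj x - c1 * edgeConflicts E x - c2 * rowExcess x := by
  have hC : edgeConflicts E x ≤ ∑ p ∈ E, ∑ r, (x p.1 r + x p.2 r + s p r - 1) ^ 2 :=
    sum_le_sum fun p hp => sum_le_sum fun r _ =>
      mul_le_sq_add_add_sub_one (hx p.1 r) (hx p.2 r) (hs p hp r)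
  have hV : rowExcess x ≤ ∑ i, ((∑ r, x i r) + t i - 1) ^ 2 := by
    refine sum_le_sum fun i _ => ?_
    obtain ⟨m, hm⟩ := hx.exists_rowSum_eq i
    rw [hm]
    exact max_sub_one_zero_le_sq_add_sub_one m (by rcases ht i with h | h <;> simp [h])
  unfold Hl
  linarith [mul_le_mul_of_nonneg_left hC hc1, mul_le_mul_of_nonneg_left hV hc2]

theorem exists_slacks_of_feas (hx : MkBin x) (hfeas : MkFeas E x) :
    ∃ (s : Fin n × Fin n → Fin k → ℝ) (t : Fin n → ℝ),
      SBin E s ∧ TBin t ∧ Hl c1 c2 E x s t = MkObj x := by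
  refine ⟨fun p r => 1 - x p.1 r - x p.2 r, fun i => 1 - ∑ r, x i r, ?_, ?_, ?_⟩
  · intro p hp r
    dsimp only
    rcases hx p.1 r with h | h <;> rcases hx p.2 r with h' | h' <;> norm_num [h, h']
    linarith [hfeas.1 p hp r]
  · intro i
    dsimp only
    obtain ⟨m, hm⟩ := hx.exists_rowSum_eq i
    have hle := hfeas.2 i
    rw [hm] at hle ⊢
    have : m = 0 ∨ m = 1 := by
      have : m ≤ 1 := by exact_mod_cast hle
      omega
    rcases this with rfl | rfl <;> norm_num
  · simp [Hl]

end Penalties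

def eraseEntry {n k : ℕ} (x : Fin n → Fin k → ℝ) (i : Fin n) (r : Fin k) :
    Fin n → Fin k → ℝ :=
  fun a b => if a = i ∧ b = r then 0 else x a b

section EraseEntry

variable {n k : ℕ} {x : Fin n → Fin k → ℝ} (i : Fin n) (r : Fin k)

theorem eraseEntry_eq_sub (a : Fin n) (b : Fin k) :
    eraseEntry x i r a b = x a b - if a = i then (if b = r then x i r else 0) else 0 := by
  unfold eraseEntry
  split_ifs <;> simp_all

theorem mkBin_eraseEntry (hx : MkBin x) : MkBin (eraseEntry x i r) := by
  intro a b
  unfold eraseEntry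
  split_ifs
  exacts [Or.inl rfl, hx a b]

theorem eraseEntry_le (hx : MkBin x) (a : Fin n) (b : Fin k) :
    eraseEntry x i r a b ≤ x a b := by
  unfold eraseEntry
  split_ifs
  exacts [hx.nonneg a b, le_rfl]

theorem rowSum_eraseEntry (a : Fin n) :
    ∑ b, eraseEntry x i r a b = ∑ b, x a b - if a = i then x i r else 0 := by
  simp only [eraseEntry_eq_sub, sum_sub_distrib]
  split_ifs <;> simp

theorem mkObj_eraseEntry : MkObj (eraseEntry x i r) = MkObj x - x i r := by
  simp only [MkObj, rowSum_eraseEntry, sum_sub_distrib, sum_ite_eq', mem_univ, if_true]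

end EraseEntry

section Repair

variable {n k : ℕ} {E : Finset (Fin n × Fin n)} {x : Fin n → Fin k → ℝ}

theorem eraseEntry_mul_le (hx : MkBin x) (i : Fin n) (r : Fin k) (a a' : Fin n) (b : Fin k) :
    eraseEntry x i r a b * eraseEntry x i r a' b ≤ x a b * x a' b :=
  mul_le_mul (eraseEntry_le i r hx _ _) (eraseEntry_le i r hx _ _)
    ((mkBin_eraseEntry i r hx).nonneg _ _) (hx.nonneg _ _)

theorem edgeConflicts_eraseEntry_le (hx : MkBin x) (i : Fin n) (r : Fin k) :
    edgeConflicts E (eraseEntry x i r) ≤ edgeConflicts E x :=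
  sum_le_sum fun _ _ => sum_le_sum fun _ _ => eraseEntry_mul_le hx i r _ _ _

theorem edgeConflicts_eraseEntry_add_one_le (hx : MkBin x) {p : Fin n × Fin n} (hp : p ∈ E)
    {r : Fin k} (h1 : x p.1 r = 1) (h2 : x p.2 r = 1) :
    edgeConflicts E (eraseEntry x p.1 r) + 1 ≤ edgeConflicts E x := by
  refine sum_add_le_sum_of_le
    (fun q _ => sum_le_sum fun b _ => eraseEntry_mul_le hx p.1 r q.1 q.2 b) hp ?_
  refine sum_add_le_sum_of_le (fun b _ => eraseEntry_mul_le hx p.1 r p.1 p.2 b) (mem_univ r) ?_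
  simp [eraseEntry, h1, h2]

theorem rowExcess_term_eraseEntry_le (hx : MkBin x) (i : Fin n) (r : Fin k) (a : Fin n) :
    max ((∑ b, eraseEntry x i r a b) - 1) 0 ≤ max ((∑ b, x a b) - 1) 0 :=
  max_le_max (sub_le_sub_right (sum_le_sum fun _ _ => eraseEntry_le i r hx _ _) 1) le_rfl

theorem rowExcess_eraseEntry_le (hx : MkBin x) (i : Fin n) (r : Fin k) :
    rowExcess (eraseEntry x i r) ≤ rowExcess x :=
  sum_le_sum fun a _ => rowExcess_term_eraseEntry_le hx i r a

theorem rowExcess_eraseEntry_add_one_le (hx : MkBin x) {i : Fin n} {r : Fin k}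
    (hr : x i r = 1) (h2 : 2 ≤ ∑ b, x i b) :
    rowExcess (eraseEntry x i r) + 1 ≤ rowExcess x := by
  refine sum_add_le_sum_of_le (fun a _ => rowExcess_term_eraseEntry_le hx i r a) (mem_univ i) ?_
  rw [rowSum_eraseEntry, if_pos rfl, hr, max_eq_left (by linarith), max_eq_left (by linarith)]
  linarith

theorem exists_violation_of_not_feas (hx : MkBin x) (h : ¬MkFeas E x) :
    (∃ p ∈ E, ∃ r, x p.1 r = 1 ∧ x p.2 r = 1) ∨ ∃ i r, x i r = 1 ∧ 2 ≤ ∑ b, x i b := by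
  unfold MkFeas at h
  push Not at h
  by_cases hedge : ∃ p ∈ E, ∃ r, 1 < x p.1 r + x p.2 r
  · obtain ⟨p, hp, r, hpr⟩ := hedge
    left
    refine ⟨p, hp, r, ?_⟩
    rcases hx p.1 r with h1 | h1 <;> rcases hx p.2 r with h2 | h2 <;> norm_num [h1, h2] at hpr
    exact ⟨h1, h2⟩
  · push Not at hedge
    obtain ⟨i, hi⟩ := h hedge
    obtain ⟨m, hm⟩ := hx.exists_rowSum_eq i
    obtain ⟨r, -, hr⟩ := exists_ne_zero_of_sum_ne_zero (s := univ) (f := x i)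
      (by rw [hm]; exact_mod_cast (by linarith : (m : ℝ) ≠ 0))
    right
    refine ⟨i, r, (hx i r).resolve_left hr, ?_⟩
    rw [hm] at hi ⊢
    have : 1 < m := by exact_mod_cast hi
    exact_mod_cast this

theorem exists_eraseEntry_of_not_feas (hx : MkBin x) (h : ¬MkFeas E x) :
    ∃ y : Fin n → Fin k → ℝ, MkBin y ∧ MkObj y = MkObj x - 1 ∧
      edgeConflicts E y + rowExcess y + 1 ≤ edgeConflicts E x + rowExcess x := by
  rcases exists_violation_of_not_feas hx h with ⟨p, hp, r, h1, h2⟩ | ⟨i, r, hr, h2⟩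
  · refine ⟨eraseEntry x p.1 r, mkBin_eraseEntry _ _ hx, by rw [mkObj_eraseEntry, h1], ?_⟩
    linarith [edgeConflicts_eraseEntry_add_one_le hx hp h1 h2, rowExcess_eraseEntry_le hx p.1 r]
  · refine ⟨eraseEntry x i r, mkBin_eraseEntry _ _ hx, by rw [mkObj_eraseEntry, hr], ?_⟩
    linarith [edgeConflicts_eraseEntry_le (E := E) hx i r, rowExcess_eraseEntry_add_one_le hx hr h2]

theorem exists_feas_mkObj_ge (hx : MkBin x) :
    ∃ y : Fin n → Fin k → ℝ,
      MkBin y ∧ MkFeas E y ∧ MkObj x - (edgeConflicts E x + rowExcess x) ≤ MkObj y := by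
  obtain ⟨N, hN⟩ := hx.exists_mkObj_eq
  induction N using Nat.strong_induction_on generalizing x with
  | _ N ih =>
    by_cases hfeas : MkFeas E x
    · exact ⟨x, hx, hfeas, by linarith [hx.edgeConflicts_nonneg E, rowExcess_nonneg x]⟩
    obtain ⟨y, hy, hobj, hpen⟩ := exists_eraseEntry_of_not_feas hx hfeas
    obtain ⟨M, hM⟩ := hy.exists_mkObj_eq
    have hMN : M < N := by
      have : (M : ℝ) < N := by linarith
      exact_mod_cast this
    obtain ⟨z, hz, hzfeas, hzobj⟩ := ih M hMN hy hM
    exact ⟨z, hz, hzfeas, by linarith⟩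

theorem one_le_edgeConflicts_add_rowExcess (hx : MkBin x) (h : ¬MkFeas E x) :
    1 ≤ edgeConflicts E x + rowExcess x := by
  obtain ⟨y, hy, -, hpen⟩ := exists_eraseEntry_of_not_feas hx h
  linarith [hy.edgeConflicts_nonneg E, rowExcess_nonneg y]

theorem Hl_lt_of_not_feas {c1 c2 α : ℝ} {s : Fin n × Fin n → Fin k → ℝ} {t : Fin n → ℝ}
    (hα : ∀ y : Fin n → Fin k → ℝ, MkBin y → MkFeas E y → MkObj y ≤ α)
    (hc1 : 1 < c1) (hc2 : 1 < c2) (hx : MkBin x) (hs : SBin E s) (ht : TBin t)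
    (h : ¬MkFeas E x) : Hl c1 c2 E x s t < α := by
  obtain ⟨y, hy, hyfeas, hyobj⟩ := exists_feas_mkObj_ge (E := E) hx
  have hC := hx.edgeConflicts_nonneg E
  have hV := rowExcess_nonneg x
  have hpos : 0 < edgeConflicts E x ∨ 0 < rowExcess x := by
    by_contra! h0
    linarith [one_le_edgeConflicts_add_rowExcess hx h]
  have hHl : Hl c1 c2 E x s t ≤ _ := Hl_le_obj_sub_penalties (by linarith) (by linarith) hx hs ht
  have hαy := hα y hy hyfeas
  rcases hpos with hpos | hpos <;> nlinarith

end Repair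

theorem stmt_0_general (n k : ℕ) (E : Finset (Fin n × Fin n))
    (c1 c2 : ℝ) (hc1 : 1 < c1) (hc2 : 1 < c2) (α : ℝ)
    (hα : IsGreatest {v : ℝ | ∃ x : Fin n → Fin k → ℝ, MkBin x ∧ MkFeas E x ∧ MkObj x = v} α) :
    IsGreatest {v : ℝ | ∃ (x : Fin n → Fin k → ℝ) (s : Fin n × Fin n → Fin k → ℝ)
        (t : Fin n → ℝ), MkBin x ∧ SBin E s ∧ TBin t ∧ Hl c1 c2 E x s t = v} α ∧
    ∀ (xt : Fin n → Fin k → ℝ) (st : Fin n × Fin n → Fin k → ℝ) (tt : Fin n → ℝ),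
      MkBin xt → SBin E st → TBin tt →
      (∀ (x : Fin n → Fin k → ℝ) (s : Fin n × Fin n → Fin k → ℝ) (t : Fin n → ℝ),
        MkBin x → SBin E s → TBin t → Hl c1 c2 E x s t ≤ Hl c1 c2 E xt st tt) →
      MkFeas E xt ∧ MkObj xt = α := by
  have hub : ∀ y : Fin n → Fin k → ℝ, MkBin y → MkFeas E y → MkObj y ≤ α :=
    fun y hy hfeas => hα.2 ⟨y, hy, hfeas, rfl⟩
  have hHl_obj : ∀ (x : Fin n → Fin k → ℝ) s t, Hl c1 c2 E x s t ≤ MkObj x :=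
    fun _ _ _ => Hl_le_obj (by linarith) (by linarith)
  obtain ⟨x0, hx0, hfeas0, rfl⟩ := hα.1
  obtain ⟨s0, t0, hs0, ht0, hHl0⟩ := exists_slacks_of_feas (c1 := c1) (c2 := c2) hx0 hfeas0
  refine ⟨⟨⟨x0, s0, t0, hx0, hs0, ht0, hHl0⟩, ?_⟩, ?_⟩
  · rintro v ⟨x, s, t, hx, hs, ht, rfl⟩
    by_cases hfeas : MkFeas E x
    · exact (hHl_obj x s t).trans (hub x hx hfeas)
    · exact (Hl_lt_of_not_feas hub hc1 hc2 hx hs ht hfeas).le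
  · intro xt st tt hxt hst htt hmax
    have hopt : MkObj x0 ≤ Hl c1 c2 E xt st tt := hHl0 ▸ hmax x0 s0 t0 hx0 hs0 ht0
    have hfeas : MkFeas E xt := by
      by_contra h
      exact (Hl_lt_of_not_feas hub hc1 hc2 hxt hst htt h).not_ge hopt
    exact ⟨hfeas, le_antisymm (hub xt hxt hfeas) (hopt.trans (hHl_obj xt st tt))⟩

/-- For c1 > 1, c2 > 1, the linear-based QUBO value equals alpha_k(G), and any
maximizer of H^l over binary points has x-part MkCS-feasible with objective alpha_k(G). -/
theorem stmt_0 (n k : ℕ) (hk : 1 ≤ k) (E : Finset (Fin n × Fin n)) (hE : SimpleEdges E)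
    (c1 c2 : ℝ) (hc1 : 1 < c1) (hc2 : 1 < c2) (α : ℝ)
    (hα : IsGreatest {v : ℝ | ∃ x : Fin n → Fin k → ℝ, MkBin x ∧ MkFeas E x ∧ MkObj x = v} α) :
    IsGreatest {v : ℝ | ∃ (x : Fin n → Fin k → ℝ) (s : Fin n × Fin n → Fin k → ℝ)
        (t : Fin n → ℝ), MkBin x ∧ SBin E s ∧ TBin t ∧ Hl c1 c2 E x s t = v} α ∧
    ∀ (xt : Fin n → Fin k → ℝ) (st : Fin n × Fin n → Fin k → ℝ) (tt : Fin n → ℝ),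
      MkBin xt → SBin E st → TBin tt →
      (∀ (x : Fin n → Fin k → ℝ) (s : Fin n × Fin n → Fin k → ℝ) (t : Fin n → ℝ),
        MkBin x → SBin E s → TBin t → Hl c1 c2 E x s t ≤ Hl c1 c2 E xt st tt) →
      MkFeas E xt ∧ MkObj xt = α :=
  stmt_0_general n k E c1 c2 hc1 hc2 α hα
end

section
/- Let k ≥ 1 and let G = (V,E) be a graph on n vertices. For any real penalty parameters c1 > 1 and c2 > 1, the nonlinear-based QUBO value satisfies Q^n_{c1,c2}(k,G) = α_k(G); moreover, every x̃ ∈ {0,1}^{n×k} maximizing H^n_{c1,c2} is MkCS-feasible and satisfies Σ_{i∈[n],r∈[k]} x̃_{ir} = α_k(G). -/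
open Finset

-- auxiliary defs
def Pen1 {n k : ℕ} (E : Finset (Fin n × Fin n)) (x : Fin n → Fin k → ℝ) : ℝ :=
  ∑ p ∈ E, ∑ r, x p.1 r * x p.2 r

def Pen2 {n k : ℕ} (x : Fin n → Fin k → ℝ) : ℝ :=
  ∑ i, ∑ r, ∑ p ∈ Finset.univ.filter (fun p => p ≠ r), x i r * x i p

lemma Hn_eq {n k : ℕ} (c1 c2 : ℝ) (E : Finset (Fin n × Fin n)) (x : Fin n → Fin k → ℝ) :
    Hn c1 c2 E x = MkObj x - c1 * Pen1 E x - c2 * Pen2 x := rfl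

lemma sum_add_one_le {ι : Type*} [DecidableEq ι] {s : Finset ι} {f g : ι → ℝ}
    (h : ∀ j ∈ s, g j ≤ f j) {a : ι} (ha : a ∈ s) (h1 : g a + 1 ≤ f a) :
    (∑ j ∈ s, g j) + 1 ≤ ∑ j ∈ s, f j := by
  rw [← Finset.add_sum_erase s f ha, ← Finset.add_sum_erase s g ha]
  have h2 := Finset.sum_le_sum (s := s.erase a) (f := g) (g := f)
    (fun j hj => h j (Finset.mem_of_mem_erase hj))
  linarith

lemma two_ones {k : ℕ} {f : Fin k → ℝ} (hf : ∀ r, f r = 0 ∨ f r = 1)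
    (h : 1 < ∑ r, f r) : ∃ r p, r ≠ p ∧ f r = 1 ∧ f p = 1 := by
  have hsum : ∑ r, f r = ((Finset.univ.filter (fun r => f r = 1)).card : ℝ) := by
    rw [Finset.card_filter]
    push_cast
    refine Finset.sum_congr rfl fun r _ => ?_
    rcases hf r with h0 | h0 <;> simp [h0]
  rw [hsum] at h
  have hcard : 1 < (Finset.univ.filter (fun r => f r = 1)).card := by exact_mod_cast h
  obtain ⟨a, ha, b, hb, hab⟩ := Finset.one_lt_card.mp hcard
  exact ⟨a, b, hab, (Finset.mem_filter.mp ha).2, (Finset.mem_filter.mp hb).2⟩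

lemma pen1_zero {n k : ℕ} {E : Finset (Fin n × Fin n)} {x : Fin n → Fin k → ℝ}
    (hx : MkBin x) (hf : MkFeas E x) : Pen1 E x = 0 := by
  refine Finset.sum_eq_zero fun p hp => Finset.sum_eq_zero fun r _ => ?_
  have h := hf.1 p hp r
  rcases hx p.1 r with h1 | h1 <;> rcases hx p.2 r with h2 | h2 <;>
    simp [h1, h2] at h ⊢
  linarith

lemma pen2_zero {n k : ℕ} {E : Finset (Fin n × Fin n)} {x : Fin n → Fin k → ℝ}
    (hx : MkBin x) (hf : MkFeas E x) : Pen2 x = 0 := by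
  have hnn : ∀ a b, 0 ≤ x a b := fun a b => by rcases hx a b with h | h <;> simp [h]
  refine Finset.sum_eq_zero fun i _ => Finset.sum_eq_zero fun r _ =>
    Finset.sum_eq_zero fun p hp => ?_
  have hpr : p ≠ r := (Finset.mem_filter.mp hp).2
  rcases hx i r with h1 | h1
  · simp [h1]
  rcases hx i p with h2 | h2
  · simp [h2]
  exfalso
  have hsub : ({r, p} : Finset (Fin k)) ⊆ Finset.univ := Finset.subset_univ _
  have hle := Finset.sum_le_sum_of_subset_of_nonneg hsub (fun q _ _ => hnn i q)
  rw [Finset.sum_pair (Ne.symm hpr)] at hle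
  have := hf.2 i
  rw [h1, h2] at hle
  linarith

lemma flipStep {n k : ℕ} {E : Finset (Fin n × Fin n)} {c1 c2 : ℝ} (hc1 : 1 < c1) (hc2 : 1 < c2)
    {x : Fin n → Fin k → ℝ} (hx : MkBin x) (hinf : ¬ MkFeas E x) :
    ∃ x' : Fin n → Fin k → ℝ, MkBin x' ∧ Hn c1 c2 E x < Hn c1 c2 E x' ∧
      (Finset.univ.filter (fun q : Fin n × Fin k => x' q.1 q.2 = 1)).card <
      (Finset.univ.filter (fun q : Fin n × Fin k => x q.1 q.2 = 1)).card := by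
  have hc1' : (0:ℝ) < c1 := by linarith
  have hc2' : (0:ℝ) < c2 := by linarith
  have hnn : ∀ a b, 0 ≤ x a b := fun a b => by rcases hx a b with h | h <;> simp [h]
  have hviol : ∃ i r, x i r = 1 ∧
      ((∃ e ∈ E, e.1 = i ∧ x e.2 r = 1) ∨ (∃ p, p ≠ r ∧ x i p = 1)) := by
    unfold MkFeas at hinf
    push_neg at hinf
    by_cases hA : ∀ p ∈ E, ∀ r, x p.1 r + x p.2 r ≤ 1
    · obtain ⟨i, hi⟩ := hinf hA
      obtain ⟨r, p, hrp, h1, h2⟩ := two_ones (hx i) hi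
      exact ⟨i, r, h1, Or.inr ⟨p, Ne.symm hrp, h2⟩⟩
    · push_neg at hA
      obtain ⟨e, he, r, hgt⟩ := hA
      rcases hx e.1 r with h1 | h1 <;> rcases hx e.2 r with h2 | h2 <;>
        rw [h1, h2] at hgt <;> try norm_num at hgt
      exact ⟨e.1, r, h1, Or.inl ⟨e, he, rfl, h2⟩⟩
  obtain ⟨i, r, hir, hcert⟩ := hviol
  classical
  set x' : Fin n → Fin k → ℝ := fun a b => if a = i ∧ b = r then 0 else x a b with hx'def
  have h'eq : ∀ a b, ¬(a = i ∧ b = r) → x' a b = x a b := fun a b h => by simp [hx'def, h]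
  have h'ir : x' i r = 0 := by simp [hx'def]
  have hx'bin : MkBin x' := by
    intro a b
    by_cases h : a = i ∧ b = r
    · left; simp [hx'def, h]
    · rw [h'eq a b h]; exact hx a b
  have h'nn : ∀ a b, 0 ≤ x' a b := fun a b => by rcases hx'bin a b with h | h <;> simp [h]
  have h'le : ∀ a b, x' a b ≤ x a b := by
    intro a b
    by_cases h : a = i ∧ b = r
    · rw [h.1, h.2, h'ir]; exact hnn i r
    · rw [h'eq a b h]
  -- cardinality drop
  have hcard : (Finset.univ.filter (fun q : Fin n × Fin k => x' q.1 q.2 = 1)).card <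
      (Finset.univ.filter (fun q : Fin n × Fin k => x q.1 q.2 = 1)).card := by
    apply Finset.card_lt_card
    have hsub : (Finset.univ.filter (fun q : Fin n × Fin k => x' q.1 q.2 = 1)) ⊆
        (Finset.univ.filter (fun q : Fin n × Fin k => x q.1 q.2 = 1)) := by
      intro q hq
      rw [Finset.mem_filter] at hq ⊢
      refine ⟨Finset.mem_univ _, ?_⟩
      by_cases h : q.1 = i ∧ q.2 = r
      · exfalso
        have := hq.2
        rw [h.1, h.2, h'ir] at this
        norm_num at this
      · rw [← h'eq q.1 q.2 h]; exact hq.2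
    refine (Finset.ssubset_iff_of_subset hsub).mpr ⟨(i, r), ?_, ?_⟩
    · simp [hir]
    · simp [h'ir]
  -- objective drop
  have hrepr : ∀ a b, x' a b = x a b - (if a = i ∧ b = r then (1:ℝ) else 0) := by
    intro a b
    by_cases h : a = i ∧ b = r
    · rw [h.1, h.2, h'ir, if_pos ⟨rfl, rfl⟩, hir]; ring
    · rw [h'eq a b h, if_neg h]; ring
  have hobj : MkObj x' = MkObj x - 1 := by
    unfold MkObj
    rw [Finset.sum_congr rfl (fun a _ => Finset.sum_congr rfl (fun b _ => hrepr a b))]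
    simp only [Finset.sum_sub_distrib]
    have hind : ∑ a : Fin n, ∑ b : Fin k, (if a = i ∧ b = r then (1:ℝ) else 0) = 1 := by
      have h1 : ∀ a : Fin n, ∑ b : Fin k, (if a = i ∧ b = r then (1:ℝ) else 0)
          = if a = i then 1 else 0 := by
        intro a; by_cases ha : a = i <;> simp [ha]
      rw [Finset.sum_congr rfl (fun a _ => h1 a)]
      simp
    rw [hind]
  have hP1le : Pen1 E x' ≤ Pen1 E x :=
    Finset.sum_le_sum fun p _ => Finset.sum_le_sum fun r' _ =>
      mul_le_mul (h'le _ _) (h'le _ _) (h'nn _ _) (hnn _ _)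
  have hP2le : Pen2 x' ≤ Pen2 x :=
    Finset.sum_le_sum fun a _ => Finset.sum_le_sum fun r' _ =>
      Finset.sum_le_sum fun p' _ =>
        mul_le_mul (h'le _ _) (h'le _ _) (h'nn _ _) (hnn _ _)
  refine ⟨x', hx'bin, ?_, hcard⟩
  rw [Hn_eq, Hn_eq, hobj]
  rcases hcert with ⟨e, he, hei, he2⟩ | ⟨p, hpr, hp1⟩
  · have hkey : Pen1 E x' + 1 ≤ Pen1 E x := by
      refine sum_add_one_le (fun p _ => Finset.sum_le_sum fun r' _ =>
        mul_le_mul (h'le _ _) (h'le _ _) (h'nn _ _) (hnn _ _)) he ?_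
      refine sum_add_one_le (fun r' _ =>
        mul_le_mul (h'le _ _) (h'le _ _) (h'nn _ _) (hnn _ _)) (Finset.mem_univ r) ?_
      rw [hei, h'ir, hir, he2]
      norm_num
    have h1 : c1 * Pen1 E x' + c1 ≤ c1 * Pen1 E x := by
      have := mul_le_mul_of_nonneg_left hkey hc1'.le
      rw [mul_add, mul_one] at this
      exact this
    have h2 : c2 * Pen2 x' ≤ c2 * Pen2 x := mul_le_mul_of_nonneg_left hP2le hc2'.le
    linarith
  · have hkey : Pen2 x' + 1 ≤ Pen2 x := by
      refine sum_add_one_le (fun a _ => Finset.sum_le_sum fun r' _ =>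
        Finset.sum_le_sum fun p' _ =>
          mul_le_mul (h'le _ _) (h'le _ _) (h'nn _ _) (hnn _ _)) (Finset.mem_univ i) ?_
      refine sum_add_one_le (fun r' _ => Finset.sum_le_sum fun p' _ =>
        mul_le_mul (h'le _ _) (h'le _ _) (h'nn _ _) (hnn _ _)) (Finset.mem_univ r) ?_
      have hL : ∑ p' ∈ Finset.univ.filter (fun p' => p' ≠ r), x' i r * x' i p' = 0 :=
        Finset.sum_eq_zero fun p' _ => by rw [h'ir, zero_mul]
      have hm : p ∈ Finset.univ.filter (fun p' => p' ≠ r) := by simp [hpr]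
      have hR : (1:ℝ) ≤ ∑ p' ∈ Finset.univ.filter (fun p' => p' ≠ r), x i r * x i p' := by
        have h := Finset.single_le_sum (f := fun p' => x i r * x i p')
          (fun p' _ => mul_nonneg (hnn _ _) (hnn _ _)) hm
        simpa [hir, hp1] using h
      rw [hL]
      linarith
    have h1 : c2 * Pen2 x' + c2 ≤ c2 * Pen2 x := by
      have := mul_le_mul_of_nonneg_left hkey hc2'.le
      rw [mul_add, mul_one] at this
      exact this
    have h2 : c1 * Pen1 E x' ≤ c1 * Pen1 E x := mul_le_mul_of_nonneg_left hP1le hc1'.le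
    linarith

lemma hn_le_alpha {n k : ℕ} {E : Finset (Fin n × Fin n)} {c1 c2 : ℝ}
    (hc1 : 1 < c1) (hc2 : 1 < c2) {α : ℝ}
    (hα : IsGreatest {v : ℝ | ∃ x : Fin n → Fin k → ℝ, MkBin x ∧ MkFeas E x ∧ MkObj x = v} α) :
    ∀ x : Fin n → Fin k → ℝ, MkBin x → Hn c1 c2 E x ≤ α := by
  suffices h : ∀ N : ℕ, ∀ x : Fin n → Fin k → ℝ, MkBin x →
      (Finset.univ.filter (fun q : Fin n × Fin k => x q.1 q.2 = 1)).card = N →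
      Hn c1 c2 E x ≤ α by
    intro x hx; exact h _ x hx rfl
  intro N
  induction N using Nat.strong_induction_on with
  | _ N ih =>
    intro x hx hN
    by_cases hf : MkFeas E x
    · rw [Hn_eq, pen1_zero hx hf, pen2_zero hx hf]
      have : MkObj x ≤ α := hα.2 ⟨x, hx, hf, rfl⟩
      linarith
    · obtain ⟨x', hx', hlt, hcard⟩ := flipStep hc1 hc2 hx hf
      rw [hN] at hcard
      exact le_of_lt (lt_of_lt_of_le hlt (ih _ hcard x' hx' rfl))

/-- For c1 > 1, c2 > 1, the nonlinear-based QUBO value equals alpha_k(G), and any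
maximizer of H^n over binary points is MkCS-feasible with objective alpha_k(G). -/
theorem stmt_1 (n k : ℕ) (hk : 1 ≤ k) (E : Finset (Fin n × Fin n)) (hE : SimpleEdges E)
    (c1 c2 : ℝ) (hc1 : 1 < c1) (hc2 : 1 < c2) (α : ℝ)
    (hα : IsGreatest {v : ℝ | ∃ x : Fin n → Fin k → ℝ, MkBin x ∧ MkFeas E x ∧ MkObj x = v} α) :
    IsGreatest {v : ℝ | ∃ x : Fin n → Fin k → ℝ, MkBin x ∧ Hn c1 c2 E x = v} α ∧
    ∀ xt : Fin n → Fin k → ℝ, MkBin xt →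
      (∀ x : Fin n → Fin k → ℝ, MkBin x → Hn c1 c2 E x ≤ Hn c1 c2 E xt) →
      MkFeas E xt ∧ MkObj xt = α := by
  obtain ⟨xs, hxsb, hxsf, hxso⟩ := hα.1
  have hHns : Hn c1 c2 E xs = α := by
    rw [Hn_eq, pen1_zero hxsb hxsf, pen2_zero hxsb hxsf, hxso]; ring
  constructor
  · constructor
    · exact ⟨xs, hxsb, hHns⟩
    · rintro v ⟨x, hx, rfl⟩
      exact hn_le_alpha hc1 hc2 hα x hx
  · intro xt hxt hmax
    have hfeas : MkFeas E xt := by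
      by_contra hnf
      obtain ⟨x', hx', hlt, -⟩ := flipStep hc1 hc2 hxt hnf
      exact absurd (hmax x' hx') (not_le.mpr hlt)
    refine ⟨hfeas, ?_⟩
    have h1 : Hn c1 c2 E xt = MkObj xt := by
      rw [Hn_eq, pen1_zero hxt hfeas, pen2_zero hxt hfeas]; ring
    have h2 : α ≤ Hn c1 c2 E xt := hHns ▸ hmax xs hxsb
    have h3 : Hn c1 c2 E xt ≤ α := hn_le_alpha hc1 hc2 hα xt hxt
    linarith
end

section
/- Let k ≥ 1 and let G = (V,E) be a graph on n vertices, and let c1, c2 be reals with either (c1 = 1 and c2 ≥ 1) or (c1 ≥ 1 and c2 = 1). Then Q^n_{c1,c2}(k,G) = α_k(G). -/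
open Finset

section AuxRepair

open Classical in
/-- First stage of repair: keep only the minimal color at each vertex. -/
noncomputable def zfix {n k : ℕ} (x : Fin n → Fin k → ℝ) : Fin n → Fin k → ℝ :=
  fun i r => if x i r = 1 ∧ ∀ r' < r, x i r' ≠ 1 then 1 else 0

open Classical in
/-- Second stage of repair: drop conflicting colors at the first endpoint of each edge. -/
noncomputable def yfix {n k : ℕ} (E : Finset (Fin n × Fin n)) (x : Fin n → Fin k → ℝ) :
    Fin n → Fin k → ℝ :=
  fun i r => if zfix x i r = 1 ∧ ∀ p ∈ E, p.1 = i → zfix x p.2 r ≠ 1 then 1 else 0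

end AuxRepair

theorem feas_obj_eq_Hn {n k : ℕ} (E : Finset (Fin n × Fin n)) (c1 c2 : ℝ)
    (x : Fin n → Fin k → ℝ) (hbin : MkBin x) (hfeas : MkFeas E x) :
    Hn c1 c2 E x = MkObj x := by
  obtain ⟨hfe, hfv⟩ := hfeas
  have hxnn : ∀ i r, 0 ≤ x i r := fun i r => by
    rcases hbin i r with h | h <;> rw [h] <;> norm_num
  have hEP : (∑ p ∈ E, ∑ r, x p.1 r * x p.2 r) = 0 := by
    refine Finset.sum_eq_zero fun p hp => Finset.sum_eq_zero fun r _ => ?_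
    rcases hbin p.1 r with h1 | h1
    · rw [h1, zero_mul]
    · rcases hbin p.2 r with h2 | h2
      · rw [h2, mul_zero]
      · have := hfe p hp r; rw [h1, h2] at this; linarith
  have hCP : (∑ i, ∑ r, ∑ p ∈ Finset.univ.filter (fun p => p ≠ r), x i r * x i p) = 0 := by
    refine Finset.sum_eq_zero fun i _ => Finset.sum_eq_zero fun r _ =>
      Finset.sum_eq_zero fun p hp => ?_
    have hpr : p ≠ r := (Finset.mem_filter.mp hp).2
    rcases hbin i r with h1 | h1
    · rw [h1, zero_mul]
    · rcases hbin i p with h2 | h2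
      · rw [h2, mul_zero]
      · exfalso
        have hpair : x i r + x i p ≤ ∑ q, x i q := by
          have := Finset.sum_le_sum_of_subset_of_nonneg
            (f := fun q => x i q) (Finset.subset_univ ({r, p} : Finset (Fin k)))
            (fun q _ _ => hxnn i q)
          rwa [Finset.sum_pair (fun h => hpr (h.symm))] at this
        have := hfv i
        rw [h1, h2] at hpair
        linarith
  simp only [Hn, hEP, hCP, mul_zero, sub_zero]


/-- If (c1 = 1 and c2 >= 1) or (c1 >= 1 and c2 = 1), then Q^n_{c1,c2}(k,G) = alpha_k(G). -/
theorem stmt_2 (n k : ℕ) (hk : 1 ≤ k) (E : Finset (Fin n × Fin n)) (hE : SimpleEdges E)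
    (c1 c2 : ℝ) (hc : (c1 = 1 ∧ 1 ≤ c2) ∨ (1 ≤ c1 ∧ c2 = 1)) (α : ℝ)
    (hα : IsGreatest {v : ℝ | ∃ x : Fin n → Fin k → ℝ, MkBin x ∧ MkFeas E x ∧ MkObj x = v} α) :
    IsGreatest {v : ℝ | ∃ x : Fin n → Fin k → ℝ, MkBin x ∧ Hn c1 c2 E x = v} α := by
  
  classical
  obtain ⟨⟨x₀, hbin₀, hfeas₀, hobj₀⟩, hub⟩ := hα
  have hc1 : (1:ℝ) ≤ c1 := by rcases hc with ⟨h, _⟩ | ⟨h, _⟩; exacts [h.ge, h]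
  have hc2 : (1:ℝ) ≤ c2 := by rcases hc with ⟨_, h⟩ | ⟨_, h⟩; exacts [h, h.ge]
  constructor
  · exact ⟨x₀, hbin₀, by rw [feas_obj_eq_Hn E c1 c2 x₀ hbin₀ hfeas₀, hobj₀]⟩
  · rintro v ⟨x, hbin, rfl⟩
    set z := zfix x with hz
    set y := yfix E x with hy
    have hzdef : ∀ i r, z i r = if x i r = 1 ∧ ∀ r' < r, x i r' ≠ 1 then 1 else 0 :=
      fun i r => by rw [hz]; rfl
    have hydef : ∀ i r, y i r =
        if z i r = 1 ∧ ∀ p ∈ E, p.1 = i → z p.2 r ≠ 1 then 1 else 0 :=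
      fun i r => by rw [hy, hz]; rfl
    have hxnn : ∀ i r, 0 ≤ x i r := fun i r => by
      rcases hbin i r with h | h <;> rw [h] <;> norm_num
    have hzbin : MkBin z := fun i r => by rw [hzdef]; split <;> simp
    have hybin : MkBin y := fun i r => by rw [hydef]; split <;> simp
    have hznn : ∀ i r, 0 ≤ z i r := fun i r => by
      rcases hzbin i r with h | h <;> rw [h] <;> norm_num
    have hynn : ∀ i r, 0 ≤ y i r := fun i r => by
      rcases hybin i r with h | h <;> rw [h] <;> norm_num
    have hzx : ∀ i r, z i r ≤ x i r := by
      intro i r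
      rw [hzdef]
      split
      · next h => rw [h.1]
      · exact hxnn i r
    have hyz : ∀ i r, y i r ≤ z i r := by
      intro i r
      rw [hydef]
      split
      · next h => rw [h.1]
      · exact hznn i r
    -- column sums of z are at most 1
    have hzcol : ∀ i, (∑ r, z i r) ≤ 1 := by
      intro i
      have : (∑ r, z i r) =
          ((Finset.univ.filter (fun r => x i r = 1 ∧ ∀ r' < r, x i r' ≠ 1)).card : ℝ) := by
        simp only [hzdef]
        rw [Finset.sum_boole]
      rw [this]
      have hcard : (Finset.univ.filter
          (fun r => x i r = 1 ∧ ∀ r' < r, x i r' ≠ 1)).card ≤ 1 := by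
        refine Finset.card_le_one.mpr fun a ha b hb => ?_
        obtain ⟨ha1, ha2⟩ := (Finset.mem_filter.mp ha).2
        obtain ⟨hb1, hb2⟩ := (Finset.mem_filter.mp hb).2
        rcases lt_trichotomy a b with h | h | h
        · exact absurd ha1 (hb2 a h)
        · exact h
        · exact absurd hb1 (ha2 b h)
      exact_mod_cast hcard
    -- if some color is used at i, z keeps one
    have hzone : ∀ i, (∃ r, x i r = 1) → (1:ℝ) ≤ ∑ r, z i r := by
      rintro i ⟨r, hr⟩
      have hne : (Finset.univ.filter (fun r => x i r = 1)).Nonempty :=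
        ⟨r, Finset.mem_filter.mpr ⟨Finset.mem_univ _, hr⟩⟩
      set r₀ := (Finset.univ.filter (fun r => x i r = 1)).min' hne with hr₀
      have hr₀mem := (Finset.univ.filter (fun r => x i r = 1)).min'_mem hne
      have hx₀ : x i r₀ = 1 := (Finset.mem_filter.mp hr₀mem).2
      have hz₀ : z i r₀ = 1 := by
        rw [hzdef, if_pos]
        refine ⟨hx₀, fun r' hr' hx' => ?_⟩
        have : r₀ ≤ r' := Finset.min'_le (Finset.univ.filter (fun q => x i q = 1)) r'
          (Finset.mem_filter.mpr ⟨Finset.mem_univ _, hx'⟩)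
        exact absurd hr' (not_lt.mpr this)
      calc (1:ℝ) = z i r₀ := hz₀.symm
        _ ≤ ∑ r, z i r := Finset.single_le_sum (fun r _ => hznn i r) (Finset.mem_univ r₀)
    -- first stage inequality, per vertex
    have hstage1 : ∀ i, (∑ r, x i r) - (∑ r, z i r) ≤
        ∑ r, ∑ p ∈ Finset.univ.filter (fun p => p ≠ r), x i r * x i p := by
      intro i
      set m := ∑ r, x i r with hm
      have hRHS : (∑ r, ∑ p ∈ Finset.univ.filter (fun p => p ≠ r), x i r * x i p)
          = m * m - m := by
        have hinner : ∀ r, (∑ p ∈ Finset.univ.filter (fun p => p ≠ r), x i r * x i p)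
            = x i r * m - x i r := by
          intro r
          rw [← Finset.mul_sum, Finset.filter_ne', Finset.sum_erase_eq_sub (Finset.mem_univ r),
            mul_sub]
          have hsq : x i r * x i r = x i r := by
            rcases hbin i r with h | h <;> rw [h] <;> ring
          rw [hsq]
        simp only [hinner]
        rw [Finset.sum_sub_distrib, ← Finset.sum_mul]
      rw [hRHS]
      by_cases hall : ∃ r, x i r = 1
      · have h1 : (1:ℝ) ≤ ∑ r, z i r := hzone i hall
        have hm1 : (1:ℝ) ≤ m := by
          obtain ⟨r, hr⟩ := hall
          calc (1:ℝ) = x i r := hr.symm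
            _ ≤ m := Finset.single_le_sum (fun r _ => hxnn i r) (Finset.mem_univ r)
        nlinarith
      · have hzero : ∀ r, x i r = 0 := fun r => by
          rcases hbin i r with h | h
          · exact h
          · exact absurd ⟨r, h⟩ hall
        have hm0 : m = 0 := by rw [hm]; exact Finset.sum_eq_zero fun r _ => hzero r
        have hz0 : (∑ r, z i r) = 0 := Finset.sum_eq_zero fun r _ => by
          rw [hzdef, if_neg]
          rintro ⟨h1, -⟩
          rw [hzero r] at h1; norm_num at h1
        rw [hm0, hz0]; norm_num
    -- second stage inequality, pointwise
    have hstage2 : ∀ i r, z i r - y i r ≤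
        ∑ p ∈ E.filter (fun p => p.1 = i), x p.1 r * x p.2 r := by
      intro i r
      have hRnn : (0:ℝ) ≤ ∑ p ∈ E.filter (fun p => p.1 = i), x p.1 r * x p.2 r :=
        Finset.sum_nonneg fun p _ => mul_nonneg (hxnn _ _) (hxnn _ _)
      rcases hzbin i r with h0 | h1
      · have hY : y i r = 0 := le_antisymm (h0 ▸ hyz i r) (hynn i r)
        rw [h0, hY]; simpa using hRnn
      · rcases hybin i r with hy0 | hy1
        · have hbad : ¬ (z i r = 1 ∧ ∀ p ∈ E, p.1 = i → z p.2 r ≠ 1) := by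
            intro h
            have : y i r = 1 := by rw [hydef, if_pos h]
            rw [hy0] at this; norm_num at this
          push_neg at hbad
          obtain ⟨p, hpE, hp1, hp2⟩ := hbad h1
          have hx1 : x p.1 r = 1 := by
            rw [hp1]
            have hle := hzx i r; rw [h1] at hle
            rcases hbin i r with h | h
            · rw [h] at hle; linarith
            · exact h
          have hx2 : x p.2 r = 1 := by
            have hle := hzx p.2 r; rw [hp2] at hle
            rcases hbin p.2 r with h | h
            · rw [h] at hle; linarith
            · exact h
          have hmem : p ∈ E.filter (fun p => p.1 = i) :=
            Finset.mem_filter.mpr ⟨hpE, hp1⟩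
          have hle := Finset.single_le_sum
            (f := fun q : Fin n × Fin n => x q.1 r * x q.2 r)
            (fun q _ => mul_nonneg (hxnn _ _) (hxnn _ _)) hmem
          simp only [hx1, hx2, one_mul] at hle
          rw [h1, hy0]
          linarith
        · rw [h1, hy1]; simpa using hRnn
    -- y is feasible
    have hyfeas : MkFeas E y := by
      constructor
      · intro p hp r
        rcases hybin p.1 r with h | h
        · rw [h]
          rcases hybin p.2 r with h2 | h2 <;> rw [h2] <;> norm_num
        · have hcond : ∀ q ∈ E, q.1 = p.1 → z q.2 r ≠ 1 := by
            by_contra hcon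
            have : y p.1 r = 0 := by
              rw [hydef, if_neg]
              rintro ⟨-, h2⟩
              exact hcon h2
            rw [h] at this; norm_num at this
          have hz2 : z p.2 r = 0 := by
            rcases hzbin p.2 r with h2 | h2
            · exact h2
            · exact absurd h2 (hcond p hp rfl)
          have hY : y p.2 r = 0 := le_antisymm (hz2 ▸ hyz p.2 r) (hynn p.2 r)
          rw [h, hY]; norm_num
      · intro i
        calc (∑ r, y i r) ≤ ∑ r, z i r := Finset.sum_le_sum fun r _ => hyz i r
          _ ≤ 1 := hzcol i
    have hyα : MkObj y ≤ α := hub ⟨y, hybin, hyfeas, rfl⟩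
    -- assemble
    have hEPnn : (0:ℝ) ≤ ∑ p ∈ E, ∑ r, x p.1 r * x p.2 r :=
      Finset.sum_nonneg fun p _ => Finset.sum_nonneg fun r _ =>
        mul_nonneg (hxnn _ _) (hxnn _ _)
    have hCPnn : (0:ℝ) ≤ ∑ i, ∑ r, ∑ p ∈ Finset.univ.filter (fun p => p ≠ r), x i r * x i p :=
      Finset.sum_nonneg fun i _ => Finset.sum_nonneg fun r _ =>
        Finset.sum_nonneg fun p _ => mul_nonneg (hxnn _ _) (hxnn _ _)
    have h1 : MkObj x - MkObj z ≤
        ∑ i, ∑ r, ∑ p ∈ Finset.univ.filter (fun p => p ≠ r), x i r * x i p := by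
      unfold MkObj
      rw [← Finset.sum_sub_distrib]
      exact Finset.sum_le_sum fun i _ => hstage1 i
    have h2 : MkObj z - MkObj y ≤ ∑ p ∈ E, ∑ r, x p.1 r * x p.2 r := by
      unfold MkObj
      have hfib : (∑ i, ∑ p ∈ E.filter (fun p => p.1 = i), ∑ r, x p.1 r * x p.2 r)
          = ∑ p ∈ E, ∑ r, x p.1 r * x p.2 r :=
        Finset.sum_fiberwise_of_maps_to (fun p _ => Finset.mem_univ p.1) _
      rw [← hfib, ← Finset.sum_sub_distrib]
      refine Finset.sum_le_sum fun i _ => ?_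
      rw [← Finset.sum_sub_distrib, Finset.sum_comm]
      exact Finset.sum_le_sum fun r _ => hstage2 i r
    have hHn : Hn c1 c2 E x ≤ MkObj y := by
      unfold Hn
      have hc1' : (∑ p ∈ E, ∑ r, x p.1 r * x p.2 r) ≤
          c1 * (∑ p ∈ E, ∑ r, x p.1 r * x p.2 r) := le_mul_of_one_le_left hEPnn hc1
      have hc2' : (∑ i, ∑ r, ∑ p ∈ Finset.univ.filter (fun p => p ≠ r), x i r * x i p) ≤
          c2 * (∑ i, ∑ r, ∑ p ∈ Finset.univ.filter (fun p => p ≠ r), x i r * x i p) :=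
        le_mul_of_one_le_left hCPnn hc2
      linarith
    linarith
end

section
/- Let k ≥ 1 and let G = (V,E) be a graph on n vertices, and let c1, c2 be reals with either (c1 = 1 and c2 ≥ 1) or (c1 ≥ 1 and c2 = 1). Then Q^l_{c1,c2}(k,G) = α_k(G); moreover, if (x̃, s̃, t̃) maximizes H^l_{c1,c2} over all binary (x,s,t), then there exists an MkCS-feasible x' ∈ {0,1}^{n×k} with x'_{ir} ≤ x̃_{ir} for all i, r, and Σ_{i∈[n],r∈[k]} x'_{ir} = α_k(G). -/
open Finset

section AuxStmt5

open Classical in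
lemma binsum_card {k : ℕ} (f : Fin k → ℝ) (hf : ∀ r, f r = 0 ∨ f r = 1) :
    ∑ r, f r = ((univ.filter (fun r => f r = 1)).card : ℝ) := by
  classical
  rw [Finset.card_filter]
  push_cast
  refine Finset.sum_congr rfl fun r _ => ?_
  rcases hf r with h | h <;> simp [h]

lemma feas_hl {n k : ℕ} (E : Finset (Fin n × Fin n)) (c1 c2 : ℝ)
    (x : Fin n → Fin k → ℝ) (hx : MkBin x) (hf : MkFeas E x) :
    ∃ (s : Fin n × Fin n → Fin k → ℝ) (t : Fin n → ℝ),
      SBin E s ∧ TBin t ∧ Hl c1 c2 E x s t = MkObj x := by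
  classical
  refine ⟨fun p r => 1 - x p.1 r - x p.2 r, fun i => 1 - ∑ r, x i r, ?_, ?_, ?_⟩
  · intro p hp r
    dsimp only
    rcases hx p.1 r with h1 | h1 <;> rcases hx p.2 r with h2 | h2
    · right; rw [h1, h2]; ring
    · left; rw [h1, h2]; ring
    · left; rw [h1, h2]; ring
    · exfalso; have := hf.1 p hp r; rw [h1, h2] at this; linarith
  · intro i
    dsimp only
    have h := binsum_card (x i) (hx i)
    have h1 := hf.2 i
    rw [h] at h1
    have h2 : (univ.filter (fun r => x i r = 1)).card ≤ 1 := by exact_mod_cast h1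
    rcases Nat.le_one_iff_eq_zero_or_eq_one.mp h2 with h3 | h3
    · right; rw [h, h3]; norm_num
    · left; rw [h, h3]; norm_num
  · unfold Hl
    have h1 : ∑ p ∈ E, ∑ r,
        (x p.1 r + x p.2 r + (1 - x p.1 r - x p.2 r) - 1) ^ 2 = 0 := by
      apply Finset.sum_eq_zero; intro p _
      apply Finset.sum_eq_zero; intro r _
      ring
    have h2 : ∑ i, ((∑ r, x i r) + (1 - ∑ r, x i r) - 1) ^ 2 = 0 := by
      apply Finset.sum_eq_zero; intro i _; ring
    simp only []
    rw [h1, h2]; ring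

lemma repair {n k : ℕ} (E : Finset (Fin n × Fin n)) (hE : SimpleEdges E)
    {c1 c2 : ℝ} (hc1 : 1 ≤ c1) (hc2 : 1 ≤ c2)
    (x : Fin n → Fin k → ℝ) (s : Fin n × Fin n → Fin k → ℝ) (t : Fin n → ℝ)
    (hx : MkBin x) (hs : SBin E s) (ht : TBin t) :
    ∃ x' : Fin n → Fin k → ℝ, MkBin x' ∧ MkFeas E x' ∧ (∀ i r, x' i r ≤ x i r) ∧
      Hl c1 c2 E x s t ≤ MkObj x' := by
  classical
  have hx0 : ∀ i r, (0:ℝ) ≤ x i r := by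
    intro i r; rcases hx i r with h | h <;> rw [h] <;> norm_num
  set M : Fin n → Finset (Fin k) := fun i => univ.filter (fun r => x i r = 1) with hM
  set x1 : Fin n → Fin k → ℝ :=
    fun i r => if (M i).min = (r : WithBot (Fin k)) then 1 else 0 with hx1def
  have hx1bin : MkBin x1 := by
    intro i r
    simp only [hx1def]
    split <;> simp
  have hmem : ∀ i r, x1 i r = 1 → x i r = 1 := by
    intro i r h
    simp only [hx1def] at h
    split at h
    · next hc =>
      have hmm := Finset.mem_of_min hc
      simp only [hM, Finset.mem_filter] at hmm
      exact hmm.2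
    · norm_num at h
  have hx1le : ∀ i r, x1 i r ≤ x i r := by
    intro i r
    rcases hx1bin i r with h | h
    · rw [h]; exact hx0 i r
    · rw [h, hmem i r h]
  have hx10 : ∀ i r, (0:ℝ) ≤ x1 i r := by
    intro i r; rcases hx1bin i r with h | h <;> rw [h] <;> norm_num
  have hsum1 : ∀ i, ∑ r, x1 i r = if (M i).Nonempty then 1 else 0 := by
    intro i
    by_cases hne : (M i).Nonempty
    · obtain ⟨r0, hr0⟩ := Finset.min_of_nonempty hne
      rw [if_pos hne]
      have key : ∀ r : Fin k, x1 i r = if r = r0 then 1 else 0 := by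
        intro r
        simp only [hx1def, hr0]
        by_cases h : r = r0
        · subst h
          norm_num
          rfl
        · rw [if_neg h, if_neg]
          intro hcc
          exact h (WithBot.coe_inj.mp hcc.symm)
      rw [Finset.sum_congr rfl (fun r _ => key r)]
      simp
    · rw [if_neg hne]
      have hemp : M i = ∅ := Finset.not_nonempty_iff_eq_empty.mp hne
      apply Finset.sum_eq_zero
      intro r _
      simp only [hx1def, hemp, Finset.min_empty]
      rw [if_neg]
      exact fun hcc => by cases hcc
  have hcard : ∀ i, ∑ r, x i r = ((M i).card : ℝ) := by
    intro i
    simp only [hM]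
    exact binsum_card (x i) (hx i)
  set x' : Fin n → Fin k → ℝ := fun i r =>
    if ∃ j : Fin n, ((j, i) ∈ E ∨ (i, j) ∈ E) ∧ j < i ∧ x1 j r = 1 then 0
    else x1 i r with hx'def
  have hx'bin : MkBin x' := by
    intro i r
    simp only [hx'def]
    split
    · left; rfl
    · exact hx1bin i r
  have hx'le1 : ∀ i r, x' i r ≤ x1 i r := by
    intro i r
    simp only [hx'def]
    split
    · exact hx10 i r
    · exact le_rfl
  have hx'one : ∀ i r, x' i r = 1 → x1 i r = 1 := by
    intro i r h
    simp only [hx'def] at h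
    split at h
    · norm_num at h
    · exact h
  -- feasibility
  have hfeas : MkFeas E x' := by
    constructor
    · intro p hp r
      rcases hx'bin p.1 r with a | a <;> rcases hx'bin p.2 r with b | b <;>
        rw [a, b] <;> try norm_num
      exfalso
      have h1 := hx'one p.1 r a
      have h2 := hx'one p.2 r b
      have hne := hE.1 p hp
      rcases lt_or_gt_of_ne hne with hlt | hgt
      · have hz : x' p.2 r = 0 := by
          simp only [hx'def]
          rw [if_pos]
          refine ⟨p.1, Or.inl ?_, hlt, h1⟩
          rw [Prod.mk.eta]; exact hp
        rw [hz] at b; norm_num at b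
      · have hz : x' p.1 r = 0 := by
          simp only [hx'def]
          rw [if_pos]
          refine ⟨p.2, Or.inr ?_, hgt, h2⟩
          rw [Prod.mk.eta]; exact hp
        rw [hz] at a; norm_num at a
    · intro i
      calc ∑ r, x' i r ≤ ∑ r, x1 i r := Finset.sum_le_sum (fun r _ => hx'le1 i r)
        _ ≤ 1 := by rw [hsum1 i]; split <;> norm_num
  set L : Finset (Fin n × Fin k) :=
    univ.filter (fun q => x1 q.1 q.2 = 1 ∧ x' q.1 q.2 = 0) with hL
  set B : Finset ((Fin n × Fin n) × Fin k) :=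
    (E ×ˢ univ).filter (fun q => x q.1.1 q.2 = 1 ∧ x q.1.2 q.2 = 1) with hB
  have key : ∀ q : Fin n × Fin k, x1 q.1 q.2 - x' q.1 q.2 =
      if (x1 q.1 q.2 = 1 ∧ x' q.1 q.2 = 0) then (1:ℝ) else 0 := by
    intro q
    rcases hx1bin q.1 q.2 with a | a <;> rcases hx'bin q.1 q.2 with b | b
    · simp [a, b]
    · exfalso; have := hx'le1 q.1 q.2; rw [a, b] at this; linarith
    · simp [a, b]
    · simp [a, b]
  have hA : MkObj x1 - MkObj x' = (L.card : ℝ) := by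
    have h1 : MkObj x1 - MkObj x' =
        ∑ q ∈ (univ ×ˢ univ : Finset (Fin n × Fin k)), (x1 q.1 q.2 - x' q.1 q.2) := by
      rw [Finset.sum_product]
      unfold MkObj
      rw [← Finset.sum_sub_distrib]
      exact Finset.sum_congr rfl fun i _ => (Finset.sum_sub_distrib _ _).symm
    rw [h1, Finset.univ_product_univ, hL, Finset.card_filter]
    push_cast
    exact Finset.sum_congr rfl fun q _ => key q
  have hcond : ∀ q ∈ L, ∃ j : Fin n,
      ((j, q.1) ∈ E ∨ (q.1, j) ∈ E) ∧ j < q.1 ∧ x1 j q.2 = 1 := by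
    intro q hq
    rw [hL, Finset.mem_filter] at hq
    by_contra hcon
    have hz := hq.2.2
    simp only [hx'def] at hz
    rw [if_neg hcon] at hz
    rw [hz] at hq
    exact absurd hq.2.1 (by norm_num)
  have hLB : L.card ≤ B.card := by
    set f : Fin n × Fin k → (Fin n × Fin n) × Fin k := fun q =>
      if h : ∃ j : Fin n, ((j, q.1) ∈ E ∨ (q.1, j) ∈ E) ∧ j < q.1 ∧ x1 j q.2 = 1 then
        (if (h.choose, q.1) ∈ E then (h.choose, q.1) else (q.1, h.choose), q.2)
      else ((q.1, q.1), q.2) with hfdef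
    have hf : ∀ q ∈ L, f q ∈ B ∧ max (f q).1.1 (f q).1.2 = q.1 ∧ (f q).2 = q.2 := by
      intro q hq
      have h := hcond q hq
      have hx1q : x1 q.1 q.2 = 1 := by
        rw [hL, Finset.mem_filter] at hq; exact hq.2.1
      obtain ⟨hj1, hj2, hj3⟩ := h.choose_spec
      have hfq : f q = (if (h.choose, q.1) ∈ E then (h.choose, q.1)
          else (q.1, h.choose), q.2) := by
        simp only [hfdef]
        rw [dif_pos h]
      by_cases he : (h.choose, q.1) ∈ E
      · rw [hfq, if_pos he]
        refine ⟨?_, ?_, rfl⟩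
        · rw [hB, Finset.mem_filter]
          exact ⟨Finset.mem_product.mpr ⟨he, Finset.mem_univ _⟩,
            hmem _ _ hj3, hmem _ _ hx1q⟩
        · exact max_eq_right hj2.le
      · have he2 : (q.1, h.choose) ∈ E := hj1.resolve_left he
        rw [hfq, if_neg he]
        refine ⟨?_, ?_, rfl⟩
        · rw [hB, Finset.mem_filter]
          exact ⟨Finset.mem_product.mpr ⟨he2, Finset.mem_univ _⟩,
            hmem _ _ hx1q, hmem _ _ hj3⟩
        · exact max_eq_left hj2.le
    apply Finset.card_le_card_of_injOn f (fun q hq => (hf q hq).1)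
    intro q hq q' hq' heq
    simp only [Finset.mem_coe] at hq hq'
    have h1 := (hf q hq).2
    have h2 := (hf q' hq').2
    rw [heq] at h1
    have e1 : q.1 = q'.1 := h1.1.symm.trans h2.1
    have e2 : q.2 = q'.2 := h1.2.symm.trans h2.2
    exact Prod.ext e1 e2
  have hBP : (B.card : ℝ) ≤ ∑ p ∈ E, ∑ r, (x p.1 r + x p.2 r + s p r - 1) ^ 2 := by
    rw [hB, Finset.card_filter]
    push_cast
    rw [← Finset.sum_product']
    apply Finset.sum_le_sum
    intro q hq
    have hqE : q.1 ∈ E := (Finset.mem_product.mp hq).1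
    split
    · next hcnd =>
      rcases hs q.1 hqE q.2 with a | a <;> rw [hcnd.1, hcnd.2, a] <;> norm_num
    · exact le_trans (by norm_num) (sq_nonneg _)
  have hC : MkObj x - MkObj x1 ≤ ∑ i, ((∑ r, x i r) + t i - 1) ^ 2 := by
    unfold MkObj
    rw [← Finset.sum_sub_distrib]
    apply Finset.sum_le_sum
    intro i _
    rw [hsum1 i]
    by_cases hne : (M i).Nonempty
    · rw [if_pos hne]
      have hcpos : 1 ≤ (M i).card := Finset.card_pos.mpr hne
      obtain ⟨d, hd⟩ : ∃ d, (M i).card = d + 1 := ⟨(M i).card - 1, by omega⟩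
      rw [hcard i, hd]
      push_cast
      have hdd : (d:ℝ) ≤ (d:ℝ)^2 := by
        have : d ≤ d ^ 2 := Nat.le_self_pow two_ne_zero d
        exact_mod_cast this
      have hd0 : (0:ℝ) ≤ (d:ℝ) := Nat.cast_nonneg d
      rcases ht i with a | a <;> rw [a] <;> nlinarith
    · rw [if_neg hne]
      have hemp : M i = ∅ := Finset.not_nonempty_iff_eq_empty.mp hne
      rw [hcard i, hemp]
      simp only [Finset.card_empty, Nat.cast_zero]
      nlinarith [sq_nonneg ((0:ℝ) + t i - 1)]
  refine ⟨x', hx'bin, hfeas, fun i r => le_trans (hx'le1 i r) (hx1le i r), ?_⟩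
  unfold Hl
  have hP1 : (0:ℝ) ≤ ∑ p ∈ E, ∑ r, (x p.1 r + x p.2 r + s p r - 1) ^ 2 := by positivity
  have hP2 : (0:ℝ) ≤ ∑ i, ((∑ r, x i r) + t i - 1) ^ 2 := by positivity
  have hLB' : (L.card : ℝ) ≤ (B.card : ℝ) := by exact_mod_cast hLB
  have e1 : ∑ p ∈ E, ∑ r, (x p.1 r + x p.2 r + s p r - 1) ^ 2 ≤
      c1 * (∑ p ∈ E, ∑ r, (x p.1 r + x p.2 r + s p r - 1) ^ 2) :=
    le_mul_of_one_le_left hP1 hc1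
  have e2 : ∑ i, ((∑ r, x i r) + t i - 1) ^ 2 ≤
      c2 * (∑ i, ((∑ r, x i r) + t i - 1) ^ 2) :=
    le_mul_of_one_le_left hP2 hc2
  linarith

end AuxStmt5

/-- If (c1 = 1 and c2 >= 1) or (c1 >= 1 and c2 = 1), then Q^l_{c1,c2}(k,G) = alpha_k(G);
moreover any maximizer (xt, st, tt) of H^l yields an MkCS-feasible x' <= xt with objective alpha_k(G). -/
theorem stmt_5 (n k : ℕ) (hk : 1 ≤ k) (E : Finset (Fin n × Fin n)) (hE : SimpleEdges E)
    (c1 c2 : ℝ) (hc : (c1 = 1 ∧ 1 ≤ c2) ∨ (1 ≤ c1 ∧ c2 = 1)) (α : ℝ)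
    (hα : IsGreatest {v : ℝ | ∃ x : Fin n → Fin k → ℝ, MkBin x ∧ MkFeas E x ∧ MkObj x = v} α) :
    IsGreatest {v : ℝ | ∃ (x : Fin n → Fin k → ℝ) (s : Fin n × Fin n → Fin k → ℝ)
        (t : Fin n → ℝ), MkBin x ∧ SBin E s ∧ TBin t ∧ Hl c1 c2 E x s t = v} α ∧
    ∀ (xt : Fin n → Fin k → ℝ) (st : Fin n × Fin n → Fin k → ℝ) (tt : Fin n → ℝ),
      MkBin xt → SBin E st → TBin tt →
      (∀ (x : Fin n → Fin k → ℝ) (s : Fin n × Fin n → Fin k → ℝ) (t : Fin n → ℝ),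
        MkBin x → SBin E s → TBin t → Hl c1 c2 E x s t ≤ Hl c1 c2 E xt st tt) →
      ∃ x' : Fin n → Fin k → ℝ, MkBin x' ∧ MkFeas E x' ∧
        (∀ i r, x' i r ≤ xt i r) ∧ MkObj x' = α := by
  have hc1 : 1 ≤ c1 := by
    rcases hc with ⟨h1, _⟩ | ⟨h1, _⟩
    · exact h1.ge
    · exact h1
  have hc2 : 1 ≤ c2 := by
    rcases hc with ⟨_, h2⟩ | ⟨_, h2⟩
    · exact h2
    · exact h2.ge
  obtain ⟨⟨x0, hx0bin, hx0feas, hx0obj⟩, hub⟩ := hα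
  obtain ⟨s0, t0, hs0, ht0, hHl0⟩ := feas_hl E c1 c2 x0 hx0bin hx0feas
  constructor
  · constructor
    · exact ⟨x0, s0, t0, hx0bin, hs0, ht0, hHl0.trans hx0obj⟩
    · rintro v ⟨x, s, t, hxb, hsb, htb, rfl⟩
      obtain ⟨x', hbin, hfeas, _, hle⟩ := repair E hE hc1 hc2 x s t hxb hsb htb
      exact hle.trans (hub ⟨x', hbin, hfeas, rfl⟩)
  · intro xt st tt hxtb hstb httb hmax
    obtain ⟨x', hbin, hfeas, hle', hle⟩ := repair E hE hc1 hc2 xt st tt hxtb hstb httb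
    refine ⟨x', hbin, hfeas, hle', le_antisymm (hub ⟨x', hbin, hfeas, rfl⟩) ?_⟩
    calc α = Hl c1 c2 E x0 s0 t0 := (hHl0.trans hx0obj).symm
      _ ≤ Hl c1 c2 E xt st tt := hmax x0 s0 t0 hx0bin hs0 ht0
      _ ≤ MkObj x' := hle
end

section
/- Let k ≥ 1 and let G be the complete graph K_{k+1} on the k+1 vertices [k+1]. Then α_k(K_{k+1}) = k; that is, the maximum of Σ_{i,r} x_{ir} over MkCS-feasible x ∈ {0,1}^{(k+1)×k} equals k. Moreover, for any reals c1 with 0 < c1 < 1 and c2 > 0, Q^n_{c1,c2}(k, K_{k+1}) ≥ (k+1) − c1 > k = α_k(K_{k+1}). -/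
open Finset

/-- Auxiliary: a binary vector with pairwise sums at most 1 has total sum at most 1. -/
lemma binsum {m : ℕ} (f : Fin m → ℝ) (hf : ∀ i, f i = 0 ∨ f i = 1)
    (hpair : ∀ i j, i ≠ j → f i + f j ≤ 1) : (∑ i, f i) ≤ 1 := by
  by_cases h : ∃ i0, f i0 = 1
  · obtain ⟨i0, hi0⟩ := h
    have hz : ∀ i ∈ Finset.univ, i ≠ i0 → f i = 0 := by
      intro i _ hi
      rcases hf i with h0 | h1
      · exact h0
      · have := hpair i i0 hi
        rw [h1, hi0] at this
        linarith
    rw [Finset.sum_eq_single i0 hz (by simp), hi0]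
  · push_neg at h
    have hz : ∀ i, f i = 0 := fun i => (hf i).resolve_right (h i)
    simp [hz]

/-- Auxiliary: summing the indicator of `r = m` over `Fin k` gives 1 when `m < k`. -/
lemma sum_ind {k m : ℕ} (hm : m < k) :
    (∑ r : Fin k, if m = (r:ℕ) then (1:ℝ) else 0) = 1 := by
  rw [Finset.sum_eq_single (⟨m, hm⟩ : Fin k)]
  · simp
  · intro r _ hr
    rw [if_neg]
    intro h
    exact hr (Fin.ext h.symm)
  · simp

/-- For the complete graph on k+1 vertices, alpha_k = k, and for 0 < c1 < 1,
c2 > 0, one has Q^n_{c1,c2}(k, K_{k+1}) >= (k+1) - c1 > k = alpha_k(K_{k+1}). -/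
theorem stmt_14 (k : ℕ) (hk : 1 ≤ k) (c1 c2 : ℝ) (hc1 : 0 < c1) (hc1' : c1 < 1)
    (hc2 : 0 < c2) :
    IsGreatest {v : ℝ | ∃ x : Fin (k+1) → Fin k → ℝ,
        MkBin x ∧ MkFeas ((Finset.univ : Finset (Fin (k+1) × Fin (k+1))).filter
          (fun p => p.1 < p.2)) x ∧ MkObj x = v} (k : ℝ) ∧
    ∃ q : ℝ,
      IsGreatest {v : ℝ | ∃ x : Fin (k+1) → Fin k → ℝ,
        MkBin x ∧ Hn c1 c2 ((Finset.univ : Finset (Fin (k+1) × Fin (k+1))).filter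
          (fun p => p.1 < p.2)) x = v} q ∧
      (k + 1 : ℝ) - c1 ≤ q ∧ (k : ℝ) < (k + 1 : ℝ) - c1 := by
  classical
  set E : Finset (Fin (k+1) × Fin (k+1)) :=
    (Finset.univ : Finset (Fin (k+1) × Fin (k+1))).filter (fun p => p.1 < p.2) with hE
  constructor
  · constructor
    · -- membership: α_k value k is attained
      refine ⟨fun i r => if (i:ℕ) = (r:ℕ) then 1 else 0, ?_, ⟨?_, ?_⟩, ?_⟩
      · intro i r; by_cases h : (i:ℕ) = (r:ℕ) <;> simp [h]
      · intro p hp r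
        have hlt : (p.1:ℕ) < (p.2:ℕ) := by
          have := (Finset.mem_filter.mp hp).2
          exact this
        by_cases h1 : (p.1:ℕ) = (r:ℕ) <;> by_cases h2 : (p.2:ℕ) = (r:ℕ) <;>
          simp [h1, h2] <;> omega
      · intro i
        apply binsum
        · intro r; by_cases h : (i:ℕ) = (r:ℕ) <;> simp [h]
        · intro r s hrs
          by_cases h1 : (i:ℕ) = (r:ℕ) <;> by_cases h2 : (i:ℕ) = (s:ℕ)
          · exact absurd (Fin.ext (h1.symm.trans h2)) hrs
          · beta_reduce; rw [if_pos h1, if_neg h2]; norm_num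
          · beta_reduce; rw [if_neg h1, if_pos h2]; norm_num
          · beta_reduce; rw [if_neg h1, if_neg h2]; norm_num
      · unfold MkObj
        rw [Fin.sum_univ_castSucc]
        have h1 : ∀ i : Fin k,
            (∑ r : Fin k, if ((Fin.castSucc i : Fin (k+1)):ℕ) = (r:ℕ) then (1:ℝ) else 0) = 1 := by
          intro i
          simpa using sum_ind (m := (i:ℕ)) i.isLt
        have h2 : (∑ r : Fin k,
            if ((Fin.last k : Fin (k+1)):ℕ) = (r:ℕ) then (1:ℝ) else 0) = 0 := by
          apply Finset.sum_eq_zero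
          intro r _
          rw [if_neg]
          have := r.isLt
          simp only [Fin.val_last]
          omega
        rw [Finset.sum_congr rfl (fun i _ => h1 i), h2]
        simp
    · -- upper bound
      rintro v ⟨x, hbin, ⟨hedge, -⟩, rfl⟩
      unfold MkObj
      rw [Finset.sum_comm]
      have hcol : ∀ r : Fin k, (∑ i, x i r) ≤ 1 := by
        intro r
        apply binsum _ (fun i => hbin i r)
        intro i j hij
        rcases lt_or_gt_of_ne hij with h | h
        · exact hedge (i, j) (Finset.mem_filter.mpr ⟨Finset.mem_univ _, h⟩) r
        · have := hedge (j, i) (Finset.mem_filter.mpr ⟨Finset.mem_univ _, h⟩) r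
          linarith
      calc (∑ r : Fin k, ∑ i, x i r) ≤ ∑ _r : Fin k, (1:ℝ) :=
            Finset.sum_le_sum (fun r _ => hcol r)
        _ = k := by simp
  · -- Part 2
    set x0 : Fin (k+1) → Fin k → ℝ :=
      fun i r => if (i:ℕ) % k = (r:ℕ) then 1 else 0 with x0def
    have hkpos : 0 < k := hk
    -- objective value of x0
    have hobj : MkObj x0 = (k:ℝ) + 1 := by
      unfold MkObj
      have hrow : ∀ i : Fin (k+1), (∑ r : Fin k, x0 i r) = 1 := by
        intro i
        simp only [x0def]
        exact sum_ind (Nat.mod_lt _ hkpos)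
      simp only [hrow]
      simp
    -- edge penalty of x0
    have hedge : (∑ p ∈ E, ∑ r : Fin k, x0 p.1 r * x0 p.2 r) = 1 := by
      have hinner : ∀ p : Fin (k+1) × Fin (k+1),
          (∑ r : Fin k, x0 p.1 r * x0 p.2 r)
            = if (p.1:ℕ) % k = (p.2:ℕ) % k then 1 else 0 := by
        intro p
        have hterm' : ∀ r : Fin k, x0 p.1 r * x0 p.2 r
            = if (p.1:ℕ) % k = (r:ℕ) ∧ (p.2:ℕ) % k = (r:ℕ) then (1:ℝ) else 0 := by
          intro r
          simp only [x0def]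
          split_ifs <;> simp_all
        simp only [hterm']
        by_cases h : (p.1:ℕ) % k = (p.2:ℕ) % k
        · rw [if_pos h]
          rw [show (∑ r : Fin k,
              if (p.1:ℕ) % k = (r:ℕ) ∧ (p.2:ℕ) % k = (r:ℕ) then (1:ℝ) else 0)
              = ∑ r : Fin k, if (p.1:ℕ) % k = (r:ℕ) then (1:ℝ) else 0 from
            Finset.sum_congr rfl (fun r _ => by
              by_cases hr : (p.1:ℕ) % k = (r:ℕ)
              · rw [if_pos hr, if_pos ⟨hr, h ▸ hr⟩]
              · rw [if_neg hr, if_neg (fun hc => hr hc.1)])]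
          exact sum_ind (Nat.mod_lt _ hkpos)
        · rw [if_neg h]
          apply Finset.sum_eq_zero
          intro r _
          rw [if_neg]
          rintro ⟨h1, h2⟩
          exact h (h1.trans h2.symm)
      simp only [hinner]
      rw [Finset.sum_eq_single_of_mem ((0 : Fin (k+1)), (Fin.last k))]
      · simp [Nat.mod_self]
      · rw [hE, Finset.mem_filter]
        refine ⟨Finset.mem_univ _, ?_⟩
        show (0 : Fin (k+1)) < Fin.last k
        rw [Fin.lt_def]
        simp [hkpos]
      · intro p hp hne
        have hlt : (p.1:ℕ) < (p.2:ℕ) := (Finset.mem_filter.mp hp).2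
        rw [if_neg]
        intro hcon
        have h2 : (p.2:ℕ) ≤ k := Nat.lt_succ_iff.mp p.2.isLt
        have h1k : (p.1:ℕ) < k := lt_of_lt_of_le hlt h2
        rw [Nat.mod_eq_of_lt h1k] at hcon
        rcases lt_or_eq_of_le h2 with h | h
        · rw [Nat.mod_eq_of_lt h] at hcon; omega
        · rw [h, Nat.mod_self] at hcon
          apply hne
          have e1 : p.1 = (0 : Fin (k+1)) := Fin.ext (by simpa using hcon)
          have e2 : p.2 = Fin.last k := Fin.ext (by simpa using h)
          exact Prod.ext e1 e2
    -- conflict penalty of x0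
    have hconf : (∑ i : Fin (k+1), ∑ r : Fin k,
        ∑ p ∈ Finset.univ.filter (fun p => p ≠ r), x0 i r * x0 i p) = 0 := by
      apply Finset.sum_eq_zero; intro i _
      apply Finset.sum_eq_zero; intro r _
      apply Finset.sum_eq_zero; intro p hp
      have hpr : p ≠ r := (Finset.mem_filter.mp hp).2
      by_cases h : (i:ℕ) % k = (r:ℕ)
      · have hz : x0 i p = 0 := by
          simp only [x0def]
          rw [if_neg]
          intro hc
          exact hpr (Fin.ext (by omega))
        rw [hz, mul_zero]
      · have hz : x0 i r = 0 := by simp only [x0def, if_neg h]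
        rw [hz, zero_mul]
    have hHn : Hn c1 c2 E x0 = (k:ℝ) + 1 - c1 := by
      unfold Hn
      rw [hobj, hedge, hconf]
      ring
    -- the finite set of all attainable Hn values
    set F : (Fin (k+1) → Fin k → Bool) → ℝ :=
      fun b => Hn c1 c2 E (fun i r => if b i r then 1 else 0) with hF
    set S : Finset ℝ := Finset.image F Finset.univ with hS
    set b0 : Fin (k+1) → Fin k → Bool := fun i r => decide ((i:ℕ) % k = (r:ℕ)) with hb0
    have hx0b0 : (fun i r => if b0 i r then (1:ℝ) else 0) = x0 := by
      funext i r
      simp [hb0, x0def]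
    have hmemS : ((k:ℝ) + 1 - c1) ∈ S := by
      rw [hS]
      apply Finset.mem_image.mpr
      exact ⟨b0, Finset.mem_univ _, by simp only [hF]; rw [hx0b0, hHn]⟩
    have hSne : S.Nonempty := ⟨_, hmemS⟩
    refine ⟨S.max' hSne, ⟨?_, ?_⟩, ?_, by push_cast; linarith⟩
    · -- max' is attained by some binary x
      have hm := S.max'_mem hSne
      obtain ⟨b, -, hb⟩ := Finset.mem_image.mp hm
      exact ⟨fun i r => if b i r then 1 else 0,
        fun i r => by by_cases h : b i r <;> simp [h], hb⟩
    · -- max' is an upper bound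
      rintro v ⟨x, hbin, rfl⟩
      apply Finset.le_max'
      rw [hS]
      apply Finset.mem_image.mpr
      refine ⟨fun i r => decide (x i r = 1), Finset.mem_univ _, ?_⟩
      simp only [hF]
      congr 1
      funext i r
      rcases hbin i r with h | h <;> simp [h]
    · -- max' ≥ k+1-c1
      have := Finset.le_max' S _ hmemS
      linarith
end

section
/- Let G = (V,E) be a finite simple undirected graph on n vertices. For c1 = 1, if x̃ ∈ {0,1}^n maximizes Σ_{i∈[n]} x_i − Σ_{(i,j)∈E} x_i x_j over {0,1}^n, then there exists a stable set S ⊆ {i : x̃_i = 1} with |S| = α(G); in particular, the maximum value equals α(G), even though the support {i : x̃_i = 1} of a maximizer need not itself be a stable set. -/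
open Finset

/-- A set of vertices is stable if no edge joins two of its vertices. -/
def StableSet {n : ℕ} (E : Finset (Fin n × Fin n)) (S : Finset (Fin n)) : Prop :=
  ∀ p ∈ E, ¬(p.1 ∈ S ∧ p.2 ∈ S)

lemma exists_stable_aux {n : ℕ} (E : Finset (Fin n × Fin n)) :
    ∀ (k : ℕ) (T : Finset (Fin n)),
      (E.filter (fun p => p.1 ∈ T ∧ p.2 ∈ T)).card ≤ k →
      ∃ S, S ⊆ T ∧ StableSet E S ∧
        T.card ≤ S.card + (E.filter (fun p => p.1 ∈ T ∧ p.2 ∈ T)).card := by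
  intro k
  induction k with
  | zero =>
    intro T hT
    refine ⟨T, Finset.Subset.refl T, ?_, by omega⟩
    intro p hp hcon
    have : p ∈ E.filter (fun p => p.1 ∈ T ∧ p.2 ∈ T) := by
      simp [Finset.mem_filter, hp, hcon.1, hcon.2]
    have := Finset.card_pos.mpr ⟨p, this⟩
    omega
  | succ k ih =>
    intro T hT
    by_cases h : E.filter (fun p => p.1 ∈ T ∧ p.2 ∈ T) = ∅
    · refine ⟨T, Finset.Subset.refl T, ?_, by simp⟩
      intro p hp hcon
      have : p ∈ E.filter (fun p => p.1 ∈ T ∧ p.2 ∈ T) := by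
        simp [Finset.mem_filter, hp, hcon.1, hcon.2]
      simp [h] at this
    · obtain ⟨p, hp⟩ := Finset.nonempty_iff_ne_empty.mpr h
      simp only [Finset.mem_filter] at hp
      set T' := T.erase p.1 with hT'
      have hsub : E.filter (fun q => q.1 ∈ T' ∧ q.2 ∈ T')
          ⊆ (E.filter (fun q => q.1 ∈ T ∧ q.2 ∈ T)).erase p := by
        intro q hq
        simp only [Finset.mem_filter, hT', Finset.mem_erase] at hq ⊢
        refine ⟨?_, hq.1, hq.2.1.2, hq.2.2.2⟩
        intro hqp; exact hq.2.1.1 (by rw [hqp])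
      have hcard : (E.filter (fun q => q.1 ∈ T' ∧ q.2 ∈ T')).card ≤ k := by
        have h1 := Finset.card_le_card hsub
        have h2 : ((E.filter (fun q => q.1 ∈ T ∧ q.2 ∈ T)).erase p).card
            = (E.filter (fun q => q.1 ∈ T ∧ q.2 ∈ T)).card - 1 := by
          apply Finset.card_erase_of_mem
          simp [Finset.mem_filter, hp.1, hp.2.1, hp.2.2]
        have h3 : 0 < (E.filter (fun q => q.1 ∈ T ∧ q.2 ∈ T)).card :=
          Finset.card_pos.mpr ⟨p, by simp [Finset.mem_filter, hp.1, hp.2.1, hp.2.2]⟩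
        omega
      obtain ⟨S, hS1, hS2, hS3⟩ := ih T' hcard
      refine ⟨S, hS1.trans (Finset.erase_subset _ _), hS2, ?_⟩
      have hTc : T'.card = T.card - 1 := Finset.card_erase_of_mem hp.2.1
      have h3 : 0 < T.card := Finset.card_pos.mpr ⟨p.1, hp.2.1⟩
      have h4 : (E.filter (fun q => q.1 ∈ T' ∧ q.2 ∈ T')).card + 1
          ≤ (E.filter (fun q => q.1 ∈ T ∧ q.2 ∈ T)).card := by
        have h1 := Finset.card_le_card hsub
        have h2 : ((E.filter (fun q => q.1 ∈ T ∧ q.2 ∈ T)).erase p).card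
            = (E.filter (fun q => q.1 ∈ T ∧ q.2 ∈ T)).card - 1 := by
          apply Finset.card_erase_of_mem
          simp [Finset.mem_filter, hp.1, hp.2.1, hp.2.2]
        have h3 : 0 < (E.filter (fun q => q.1 ∈ T ∧ q.2 ∈ T)).card :=
          Finset.card_pos.mpr ⟨p, by simp [Finset.mem_filter, hp.1, hp.2.1, hp.2.2]⟩
        omega
      omega

/-- For c1 = 1, if xt maximizes sum_i x_i - sum_{(i,j) in E} x_i x_j over binary x,
then there is a stable set S contained in the support of xt with |S| = alpha(G); in particular
the maximum value equals alpha(G). -/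
theorem stmt_17 (n : ℕ) (E : Finset (Fin n × Fin n)) (hE : SimpleEdges E) (a : ℕ)
    (ha : IsGreatest {m : ℕ | ∃ S : Finset (Fin n), StableSet E S ∧ S.card = m} a)
    (xt : Fin n → ℝ) (hxt : ∀ i, xt i = 0 ∨ xt i = 1)
    (hmax : ∀ x : Fin n → ℝ, (∀ i, x i = 0 ∨ x i = 1) →
      (∑ i, x i) - (∑ p ∈ E, x p.1 * x p.2) ≤ (∑ i, xt i) - (∑ p ∈ E, xt p.1 * xt p.2)) :
    (∃ S : Finset (Fin n), StableSet E S ∧ (∀ i ∈ S, xt i = 1) ∧ S.card = a) ∧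
    (∑ i, xt i) - (∑ p ∈ E, xt p.1 * xt p.2) = (a : ℝ) := by
  classical
  set T := Finset.univ.filter (fun i => xt i = 1) with hTdef
  have hmemT : ∀ i, i ∈ T ↔ xt i = 1 := by intro i; simp [hTdef]
  -- value of the objective at xt
  have hsum1 : (∑ i, xt i) = (T.card : ℝ) := by
    rw [hTdef]
    rw [← Finset.sum_boole]
    apply Finset.sum_congr rfl
    intro i _
    rcases hxt i with h | h <;> simp [h]
  have hsum2 : (∑ p ∈ E, xt p.1 * xt p.2)
      = ((E.filter (fun p => p.1 ∈ T ∧ p.2 ∈ T)).card : ℝ) := by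
    rw [Finset.card_filter, Nat.cast_sum]
    apply Finset.sum_congr rfl
    intro p _
    by_cases h1 : xt p.1 = 1
    · by_cases h2 : xt p.2 = 1
      · simp [h1, h2, hmemT]
      · rcases hxt p.2 with h | h
        · simp [h, h2, hmemT]
        · exact absurd h h2
    · rcases hxt p.1 with h | h
      · simp [h, h1, hmemT]
      · exact absurd h h1
  -- objective at xt is at least a
  obtain ⟨S0, hS0stab, hS0card⟩ := ha.1
  have hge : (a : ℝ) ≤ (∑ i, xt i) - (∑ p ∈ E, xt p.1 * xt p.2) := by
    have := hmax (fun i => if i ∈ S0 then 1 else 0) (by intro i; by_cases h : i ∈ S0 <;> simp [h])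
    have e1 : (∑ i, (fun i => if i ∈ S0 then (1:ℝ) else 0) i) = (a : ℝ) := by
      simp [Finset.sum_boole, hS0card]
    have e2 : (∑ p ∈ E, (if p.1 ∈ S0 then (1:ℝ) else 0) * (if p.2 ∈ S0 then (1:ℝ) else 0)) = 0 := by
      apply Finset.sum_eq_zero
      intro p hp
      have := hS0stab p hp
      by_cases h1 : p.1 ∈ S0
      · by_cases h2 : p.2 ∈ S0
        · exact absurd ⟨h1, h2⟩ this
        · simp [h2]
      · simp [h1]
    simp only [e1, e2] at this
    linarith
  -- stable subset of T
  obtain ⟨S, hS1, hS2, hS3⟩ :=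
    exists_stable_aux E (E.filter (fun p => p.1 ∈ T ∧ p.2 ∈ T)).card T le_rfl
  have hScard_le : S.card ≤ a := ha.2 ⟨S, hS2, rfl⟩
  have hge' : (a : ℝ) ≤ (T.card : ℝ) - ((E.filter (fun p => p.1 ∈ T ∧ p.2 ∈ T)).card : ℝ) := by
    rw [hsum1, hsum2] at hge; exact hge
  have hle' : (T.card : ℝ) - ((E.filter (fun p => p.1 ∈ T ∧ p.2 ∈ T)).card : ℝ) ≤ (S.card : ℝ) := by
    have : (T.card : ℝ) ≤ (S.card : ℝ) + ((E.filter (fun p => p.1 ∈ T ∧ p.2 ∈ T)).card : ℝ) := by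
      exact_mod_cast hS3
    linarith
  have hSa : S.card = a := by
    have : (a : ℝ) ≤ (S.card : ℝ) := le_trans hge' hle'
    have := Nat.cast_le (α := ℝ) |>.mp this
    omega
  constructor
  · exact ⟨S, hS2, fun i hi => (hmemT i).mp (hS1 hi), hSa⟩
  · rw [hsum1, hsum2]
    have : (S.card : ℝ) = (a : ℝ) := by exact_mod_cast hSa
    linarith [hle', hge', this]
end
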